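/- Let $E$ be the elliptic curve over the rational function field $\mathbb{Q}(T)$ given by the Weierstrass equation $y^2 + (T^3 + T)xy = x^3 - (4T^5 - 17T^4 + 30T^3 - 18T^2 + 4)x^2 + T^2(2T-1)(3T^2 - 7T + 5)^2 x$. Then there exists $y_0 \in \mathbb{Q}(T)$ such that $(3T^2 - 7T + 5,\, y_0)$ is a point of $E(\mathbb{Q}(T))$ of infinite order. -/

import Mathlib

/-!
If `P = (x₀, y₀)` had finite order, then, `(0, 0)` being the only nonzero `2`-torsion point
(`b₂² - 64a₄` is not a square), one of `P`, `P - (0, 0)`, `(0, 0)` would be twice a rational point.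
Doubling produces a square `x`-coordinate and translation by `(0, 0)` maps `x` to `a₄ / x`, so one
of `x₀`, `x₀ a₄`, `a₄` would be a square in `ℚ(T)`. None is: `ℚ[T]` is integrally closed, and each
of these polynomials takes a non-square value at some rational point.
-/

open WeierstrassCurve

noncomputable section

/-- The generic fibre of the properly elliptic surface birational over `ℚ` to `Z(11,1)`:
the elliptic curve over `ℚ(T)` with Weierstrass equation
`y² + (T³+T)xy = x³ - (4T⁵ - 17T⁴ + 30T³ - 18T² + 4)x² + T²(2T-1)(3T² - 7T + 5)²x`. -/
def E111 : WeierstrassCurve (RatFunc ℚ) :=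
  letI T : RatFunc ℚ := RatFunc.X
  { a₁ := T^3 + T
    a₂ := -(4*T^5 - 17*T^4 + 30*T^3 - 18*T^2 + 4)
    a₃ := 0
    a₄ := T^2*(2*T - 1)*(3*T^2 - 7*T + 5)^2
    a₆ := 0 }

open Polynomial

theorem IsIntegrallyClosed.isSquare_algebraMap_iff {R K : Type*} [CommRing R]
    [IsIntegrallyClosed R] [Field K] [Algebra R K] [IsFractionRing R K] {r : R} :
    IsSquare (algebraMap R K r) ↔ IsSquare r := by
  refine ⟨fun ⟨x, hx⟩ => ?_, fun h => h.map _⟩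
  obtain ⟨y, rfl⟩ := IsIntegrallyClosed.exists_algebraMap_eq_of_isIntegral_pow (R := R) (K := K)
    two_pos (by rw [sq, ← hx]; exact isIntegral_algebraMap)
  exact ⟨y, IsFractionRing.injective R K (by rw [hx, map_mul])⟩

theorem RatFunc.not_isSquare_algebraMap_of_eval {K : Type*} [Field K] {p : K[X]} (a : K)
    (h : ¬IsSquare (p.eval a)) : ¬IsSquare (algebraMap K[X] (RatFunc K) p) := by
  rw [IsIntegrallyClosed.isSquare_algebraMap_iff]
  exact fun hp => h (hp.map (evalRingHom a))

theorem IsOfFinAddOrder.exists_add_self_eq_or {G : Type*} [AddCommGroup G] {P T₀ : G}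
    (hP : IsOfFinAddOrder P) (h₂ : ∀ R : G, R + R = 0 → R = 0 ∨ R = T₀) :
    (∃ Q, Q + Q = P) ∨ (∃ Q, Q + Q + T₀ = P) ∨ ∃ Q, Q + Q = T₀ := by
  set n := addOrderOf P
  have hn : 0 < n := hP.addOrderOf_pos
  have hnP : n • P = 0 := addOrderOf_nsmul_eq_zero P
  have hP₁ : (n + 1) • P = P := by rw [succ_nsmul, hnP, zero_add]
  rcases Nat.even_or_odd' n with ⟨m, hm | hm⟩
  · have hR : m • P + m • P = 0 := by rw [← add_nsmul, ← two_mul, ← hm, hnP]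
    have hR₀ : m • P ≠ 0 := fun h =>
      (Nat.le_of_dvd (by omega) (addOrderOf_dvd_of_nsmul_eq_zero h)).not_gt (by omega)
    obtain rfl := (h₂ _ hR).resolve_left hR₀
    rcases Nat.even_or_odd' m with ⟨k, hk | hk⟩
    · exact .inr <| .inr ⟨k • P, by rw [← add_nsmul, ← two_mul, ← hk]⟩
    · refine .inr <| .inl ⟨(k + 1) • P, ?_⟩
      rw [← add_nsmul, ← add_nsmul, ← hP₁]
      congr 1
      omega
  · exact .inl ⟨(m + 1) • P, by rw [← add_nsmul, ← hP₁]; congr 1; omega⟩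

namespace WeierstrassCurve.Affine

variable {F : Type*} [Field F] {W : Affine F}

section Formulas

variable (h₃ : W.a₃ = 0) (h₆ : W.a₆ = 0)
include h₃ h₆

theorem eq_zero_of_equation_zero {y : F} (h : W.Equation 0 y) : y = 0 := by
  rw [equation_iff] at h
  exact pow_eq_zero_iff two_ne_zero |>.mp <| by linear_combination h - y * h₃ + h₆

-- The `x`-coordinate of a nonzero `2`-torsion point is a root of `4X² + b₂X + 4a₄`, the
-- `2`-division polynomial divided by `X`.
theorem isSquare_b₂_sq_sub_of_Y_eq_negY {x y : F} (h : W.Equation x y) (hy : y = W.negY x y)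
    (hx : x ≠ 0) : IsSquare (W.b₂ ^ 2 - 64 * W.a₄) := by
  have hl : 2 * y + W.a₁ * x = 0 := by rw [negY] at hy; linear_combination hy - h₃
  rw [equation_iff] at h
  refine ⟨8 * x + W.b₂, mul_left_cancel₀ hx ?_⟩
  rw [b₂]
  linear_combination (64 : F) * h - 64 * y * h₃ + 64 * h₆ - 16 * (2 * y + W.a₁ * x) * hl

theorem nonsingular_of_equation {x y : F} (hdisc : ¬IsSquare (W.b₂ ^ 2 - 64 * W.a₄))
    (h : W.Equation x y) (hx : x ≠ 0) : W.Nonsingular x y :=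
  (nonsingular_iff x y).mpr
    ⟨h, .inr fun hy => hdisc (isSquare_b₂_sq_sub_of_Y_eq_negY h₃ h₆ h hy hx)⟩

variable [DecidableEq F]

theorem addX_zero_eq {x y : F} (h : W.Equation x y) (hx : x ≠ 0) :
    W.addX x 0 (W.slope x 0 y 0) = W.a₄ / x := by
  rw [equation_iff] at h
  rw [slope_of_X_ne hx, addX]
  field_simp
  linear_combination x * h - x * y * h₃ + x * h₆

theorem addX_self_eq {x y : F} (h : W.Equation x y) (hy : y ≠ W.negY x y) :
    W.addX x x (W.slope x x y y) = ((x ^ 2 - W.a₄) / (y - W.negY x y)) ^ 2 := by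
  have hd : y - W.negY x y = 2 * y + W.a₁ * x := by rw [negY, h₃]; ring
  -- naming the denominator lets `field_simp` clear it
  obtain ⟨t, ht⟩ : ∃ t, t = 2 * y + W.a₁ * x := ⟨_, rfl⟩
  have ht₀ : t ≠ 0 := by rw [ht, ← hd]; exact sub_ne_zero.mpr hy
  rw [equation_iff] at h
  rw [slope_of_Y_ne rfl hy, addX, hd, ← ht]
  field_simp
  linear_combination (-(W.a₁ ^ 2 + 4 * W.a₂ + 8 * x)) * h
    + (W.a₁ ^ 2 + 4 * W.a₂ + 8 * x) * (y * h₃ - h₆)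
    + (W.a₁ * (3 * x ^ 2 + 2 * W.a₂ * x + W.a₄ - W.a₁ * y)
        - (W.a₂ + 2 * x) * (t + 2 * y + W.a₁ * x)) * ht

end Formulas

section Points

variable [DecidableEq F] (h₃ : W.a₃ = 0) (h₀ : W.Nonsingular 0 0)
include h₃ h₀

theorem exists_eq_sq_of_add_self_eq_some {Q : W.Point} {x y : F} {h : W.Nonsingular x y}
    (hQ : Q + Q = .some _ _ h) : ∃ r s : F, s ≠ 0 ∧ x = ((r ^ 2 - W.a₄) / s) ^ 2 := by
  have h₆ := (nonsingular_zero.mp h₀).1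
  rcases Q with _ | @⟨u, v, hu⟩
  · exact absurd hQ.symm (Point.some_ne_zero h)
  by_cases hv : v = W.negY u v
  · rw [Point.add_self_of_Y_eq hv] at hQ
    exact absurd hQ.symm (Point.some_ne_zero h)
  rw [Point.add_self_of_Y_ne hv, Point.some.injEq] at hQ
  exact ⟨u, v - W.negY u v, sub_ne_zero.mpr hv, by rw [← hQ.1, addX_self_eq h₃ h₆ hu.1 hv]⟩

theorem isSquare_of_add_self_eq_some {Q : W.Point} {x y : F} {h : W.Nonsingular x y}
    (hQ : Q + Q = .some _ _ h) : IsSquare x := by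
  obtain ⟨r, s, -, rfl⟩ := exists_eq_sq_of_add_self_eq_some h₃ h₀ hQ
  exact ⟨_, sq _⟩

theorem isSquare_a₄_of_add_self_eq_some_zero {Q : W.Point} (hQ : Q + Q = .some _ _ h₀) :
    IsSquare W.a₄ := by
  obtain ⟨r, s, hs, hx⟩ := exists_eq_sq_of_add_self_eq_some h₃ h₀ hQ
  have : r ^ 2 - W.a₄ = 0 := by simpa [hs] using hx.symm
  exact ⟨r, by linear_combination -this⟩

theorem eq_zero_or_eq_some_zero_of_add_self_eq_zero (hdisc : ¬IsSquare (W.b₂ ^ 2 - 64 * W.a₄))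
    {R : W.Point} (hR : R + R = 0) : R = 0 ∨ R = .some _ _ h₀ := by
  have h₆ := (nonsingular_zero.mp h₀).1
  rcases R with _ | @⟨x, y, h⟩
  · exact .inl rfl
  by_cases hy : y = W.negY x y
  · obtain rfl : x = 0 := by
      by_contra hx
      exact hdisc (isSquare_b₂_sq_sub_of_Y_eq_negY h₃ h₆ h.1 hy hx)
    obtain rfl := eq_zero_of_equation_zero h₃ h₆ h.1
    exact .inr rfl
  · rw [Point.add_self_of_Y_ne hy] at hR
    exact absurd hR (Point.some_ne_zero _)

theorem isSquare_mul_a₄_of_add_self_add_eq_some {Q : W.Point} {x y : F}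
    {h : W.Nonsingular x y} (hQ : Q + Q + .some _ _ h₀ = .some _ _ h) :
    IsSquare (x * W.a₄) := by
  have h₆ := (nonsingular_zero.mp h₀).1
  rcases hS : Q + Q with _ | @⟨u, v, hu⟩
  · rw [hS, ← Point.zero_def, zero_add, Point.some.injEq] at hQ
    exact ⟨0, by rw [← hQ.1]; ring⟩
  by_cases hu₀ : u = 0
  · subst hu₀
    obtain rfl := eq_zero_of_equation_zero h₃ h₆ hu.1
    rw [hS, Point.add_self_of_Y_eq (by simp [negY, h₃])] at hQ
    exact absurd hQ.symm (Point.some_ne_zero h)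
  obtain ⟨r, rfl⟩ := isSquare_of_add_self_eq_some h₃ h₀ hS
  have hr : r ≠ 0 := by rintro rfl; exact hu₀ (zero_mul 0)
  rw [hS, Point.add_of_X_ne hu₀, Point.some.injEq, addX_zero_eq h₃ h₆ hu.1 hu₀] at hQ
  exact ⟨W.a₄ / r, by rw [← hQ.1]; field_simp⟩

end Points

theorem addOrderOf_some_eq_zero [DecidableEq F] (h₃ : W.a₃ = 0) (h₆ : W.a₆ = 0)
    (hdisc : ¬IsSquare (W.b₂ ^ 2 - 64 * W.a₄)) (ha₄ : ¬IsSquare W.a₄) {x y : F}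
    (h : W.Nonsingular x y) (hx : ¬IsSquare x) (hxa₄ : ¬IsSquare (x * W.a₄)) :
    addOrderOf (Point.some _ _ h) = 0 := by
  have h₀ : W.Nonsingular 0 0 :=
    nonsingular_zero.mpr ⟨h₆, .inr fun ha₀ => ha₄ (ha₀ ▸ .zero)⟩
  refine addOrderOf_eq_zero_iff.mpr fun hfin => ?_
  rcases hfin.exists_add_self_eq_or
      fun _ => eq_zero_or_eq_some_zero_of_add_self_eq_zero h₃ h₀ hdisc with
    ⟨Q, hQ⟩ | ⟨Q, hQ⟩ | ⟨Q, hQ⟩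
  · exact hx (isSquare_of_add_self_eq_some h₃ h₀ hQ)
  · exact hxa₄ (isSquare_mul_a₄_of_add_self_add_eq_some h₃ h₀ hQ)
  · exact ha₄ (isSquare_a₄_of_add_self_eq_some_zero h₃ h₀ hQ)

end WeierstrassCurve.Affine

namespace E111

theorem not_isSquare_x : ¬IsSquare (3 * RatFunc.X ^ 2 - 7 * RatFunc.X + 5 : RatFunc ℚ) := by
  have : (3 * RatFunc.X ^ 2 - 7 * RatFunc.X + 5 : RatFunc ℚ) =
      algebraMap ℚ[X] (RatFunc ℚ) (3 * X ^ 2 - 7 * X + 5) := by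
    simp only [map_add, map_sub, map_mul, map_pow, map_ofNat, RatFunc.algebraMap_X]
  rw [this]
  exact RatFunc.not_isSquare_algebraMap_of_eval 0 (by norm_num)

theorem a₄_eq : E111.a₄ =
    algebraMap ℚ[X] (RatFunc ℚ) (X ^ 2 * (2 * X - 1) * (3 * X ^ 2 - 7 * X + 5) ^ 2) := by
  simp only [E111, map_sub, map_add, map_mul, map_pow, map_ofNat, map_one, RatFunc.algebraMap_X]

theorem not_isSquare_a₄ : ¬IsSquare E111.a₄ := by
  rw [a₄_eq]
  exact RatFunc.not_isSquare_algebraMap_of_eval (-1) (by norm_num)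

theorem not_isSquare_x_mul_a₄ :
    ¬IsSquare ((3 * RatFunc.X ^ 2 - 7 * RatFunc.X + 5) * E111.a₄) := by
  have : (3 * RatFunc.X ^ 2 - 7 * RatFunc.X + 5 : RatFunc ℚ) * E111.a₄ =
      algebraMap ℚ[X] (RatFunc ℚ) (X ^ 2 * (2 * X - 1) * (3 * X ^ 2 - 7 * X + 5) ^ 3) := by
    rw [a₄_eq]
    simp only [map_sub, map_add, map_mul, map_pow, map_ofNat, map_one, RatFunc.algebraMap_X]
    ring
  rw [this]
  exact RatFunc.not_isSquare_algebraMap_of_eval (-1) (by norm_num)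

theorem not_isSquare_b₂_sq_sub : ¬IsSquare (E111.b₂ ^ 2 - 64 * E111.a₄) := by
  have : E111.b₂ ^ 2 - 64 * E111.a₄ = algebraMap ℚ[X] (RatFunc ℚ)
      (((X ^ 3 + X) ^ 2 - 4 * (4 * X ^ 5 - 17 * X ^ 4 + 30 * X ^ 3 - 18 * X ^ 2 + 4)) ^ 2
        - 64 * (X ^ 2 * (2 * X - 1) * (3 * X ^ 2 - 7 * X + 5) ^ 2)) := by
    simp only [b₂, E111, map_sub, map_add, map_mul, map_pow, map_ofNat, map_one,
      RatFunc.algebraMap_X]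
    ring
  rw [this]
  exact RatFunc.not_isSquare_algebraMap_of_eval 2 (by norm_num)

theorem equation : E111.toAffine.Equation (3 * RatFunc.X ^ 2 - 7 * RatFunc.X + 5)
    (6 * RatFunc.X ^ 4 - 26 * RatFunc.X ^ 3 + 41 * RatFunc.X ^ 2 - 27 * RatFunc.X + 5) := by
  rw [Affine.equation_iff]
  simp only [E111]
  ring

end E111

open Classical in
/-- There exists `y₀ ∈ ℚ(T)` such that `(3T² - 7T + 5, y₀)` is a point of `E(ℚ(T))` of
infinite order. -/
theorem Z111_point_of_infinite_order :
    letI T : RatFunc ℚ := RatFunc.X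
    ∃ (y₀ : RatFunc ℚ) (h : E111.toAffine.Nonsingular (3*T^2 - 7*T + 5) y₀),
      addOrderOf (WeierstrassCurve.Affine.Point.some _ _ h) = 0 := by
  have h := Affine.nonsingular_of_equation rfl rfl E111.not_isSquare_b₂_sq_sub E111.equation
    fun h₀ => E111.not_isSquare_x (h₀ ▸ .zero)
  exact ⟨_, h, Affine.addOrderOf_some_eq_zero rfl rfl E111.not_isSquare_b₂_sq_sub
    E111.not_isSquare_a₄ h E111.not_isSquare_x E111.not_isSquare_x_mul_a₄⟩
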